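/- There is no continuous function F, defined on the subspace of Baire space consisting of all p : ℕ → ℕ that enumerate (via the fixed encoding of binary words) some nonempty tree T ⊆ List Bool having eventually constant paths everywhere, with values in Cantor space ℕ → Bool, such that whenever p enumerates such a tree T, F p is an eventually constant path of T. (In particular, the problem ECP is not computable.) -/

import Mathlib

def EnumeratesTree (code : List Bool → ℕ) (p : ℕ → ℕ) (T : Set (List Bool)) : Prop :=
  T = {w | ∃ k, p k = code w + 1}

def ECPTree (T : Set (List Bool)) : Prop :=
  T.Nonempty ∧ (∀ w ∈ T, ∀ u, u <+: w → u ∈ T) ∧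
    ∀ w ∈ T, ∃ u ∈ T, w <+: u ∧ ∃ b : Bool, ∀ n : ℕ, u ++ List.replicate n b ∈ T

def ECPath (T : Set (List Bool)) (x : ℕ → Bool) : Prop :=
  (∀ n : ℕ, (List.ofFn fun i : Fin n => x i) ∈ T) ∧ ∃ N : ℕ, ∃ b : Bool, ∀ k, N ≤ k → x k = b

/-!
Suppose `F` is continuous on the enumerations of ECP trees and always returns an eventually
constant path. We build finite combs (finitely many eventually constant teeth, whose prefixes
form an ECP tree) together with enumerations `pᵢ`, each extending an initial segment of the
previous one. The value `F pᵢ` is a tooth `xᵢ`; all teeth are constant from position `nᵢ`, and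
continuity gives `kᵢ ≥ nᵢ` such that `F` maps every enumeration agreeing with `pᵢ` below `kᵢ` to
a sequence agreeing with `xᵢ` up to `nᵢ`. The next comb replaces `xᵢ` by two teeth that leave
`xᵢ` at position `kᵢ` and then stay constant, one `true`, one `false`. Distinct old teeth differ
somewhere up to `nᵢ`, so `F pᵢ₊₁` is one of these two, and the other one survives forever. Hence
the limit enumeration `p` enumerates an ECP tree, while for every `i` the sequence `F p` agrees
with `xᵢ` at `nᵢ` but not at `kᵢ`.
-/

open Function Set Topology PiNat Encodable

theorem PiNat.hasBasis_nhds_cylinder {E : ℕ → Type*} [∀ n, TopologicalSpace (E n)]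
    [∀ n, DiscreteTopology (E n)] (x : ∀ n, E n) :
    (𝓝 x).HasBasis (fun _ => True) (cylinder x) := by
  refine ⟨fun s => ⟨fun hs => ?_, fun ⟨n, _, hn⟩ => Filter.mem_of_superset
    ((isOpen_cylinder E x n).mem_nhds (self_mem_cylinder x n)) hn⟩⟩
  obtain ⟨_, ⟨y, n, rfl⟩, hx, hs⟩ := (isTopologicalBasis_cylinders E).mem_nhds_iff.1 hs
  exact ⟨n, trivial, mem_cylinder_iff_eq.1 ((mem_cylinder_comm _ _ _).1 hx) ▸ hs⟩

theorem ContinuousWithinAt.exists_mapsTo_cylinder {α β : Type*} [TopologicalSpace α]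
    [DiscreteTopology α] [TopologicalSpace β] [DiscreteTopology β] {F : (ℕ → α) → ℕ → β}
    {D : Set (ℕ → α)} {p : ℕ → α} (hF : ContinuousWithinAt F D p) (M : ℕ) :
    ∃ k, MapsTo F (cylinder p k ∩ D) (cylinder (F p) M) := by
  obtain ⟨k, -, hk⟩ := ((nhdsWithin_hasBasis (hasBasis_nhds_cylinder p) D).tendsto_iff
    (hasBasis_nhds_cylinder (F p))).1 hF M trivial
  exact ⟨k, hk⟩

theorem PiNat.diag_mem_cylinder {α : Type*} {f : ℕ → ℕ → α} {k : ℕ → ℕ}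
    (hf : ∀ i j, i ≤ j → f j ∈ cylinder (f i) (k i)) (hk : ∀ j, j < k (j + 1)) (i : ℕ) :
    (fun j => f (j + 1) j) ∈ cylinder (f i) (k i) := by
  intro j hj
  rcases le_total (j + 1) i with h | h
  · exact (hf _ _ h j (hk j)).symm
  · exact hf _ _ h j hj

def initSeg {α : Type*} (x : ℕ → α) (n : ℕ) : List α := List.ofFn fun i : Fin n => x i

def ConstFrom {α : Type*} (n : ℕ) (x : ℕ → α) : Prop := ∀ m, n ≤ m → x m = x n

section InitSeg

variable {α : Type*} {x y : ℕ → α} {m n : ℕ}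

@[simp] theorem length_initSeg : (initSeg x n).length = n := List.length_ofFn

theorem initSeg_eq_initSeg_iff : initSeg x n = initSeg y n ↔ x ∈ cylinder y n := by
  simp [initSeg, List.ofFn_inj, funext_iff, Fin.forall_iff]

theorem take_initSeg (h : m ≤ n) : (initSeg x n).take m = initSeg x m :=
  List.ext_getElem (by simp [h]) fun _ _ _ => by simp [initSeg]

theorem initSeg_prefix_initSeg (h : m ≤ n) : initSeg x m <+: initSeg x n :=
  take_initSeg h ▸ List.take_prefix m _

theorem eq_initSeg_of_prefix {u : List α} (h : u <+: initSeg x n) : u = initSeg x u.length := by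
  have hu := List.prefix_iff_eq_take.1 h
  rwa [take_initSeg (by simpa using h.length_le)] at hu

theorem ConstFrom.mono (h : ConstFrom m x) (hmn : m ≤ n) : ConstFrom n x :=
  fun i hi => (h i (hmn.trans hi)).trans (h n hmn).symm

theorem ConstFrom.initSeg_add (h : ConstFrom m x) (l : ℕ) :
    initSeg x (m + l) = initSeg x m ++ List.replicate l (x m) := by
  rw [initSeg, List.ofFn_add, ← List.ofFn_const]
  exact congrArg₂ (· ++ ·) rfl (congrArg List.ofFn (funext fun i => h _ (Nat.le_add_right m i)))

theorem ConstFrom.eq_of_mem_cylinder (hx : ConstFrom n x) (hy : ConstFrom n y)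
    (hxy : y ∈ cylinder x (n + 1)) : y = x := by
  funext i
  rcases le_or_gt i n with h | h
  · exact hxy i (by omega)
  · rw [hx i h.le, hy i h.le, hxy n (by omega)]

end InitSeg

def comb {α : Type*} (W : Set (ℕ → α)) : Set (List α) := {v | ∃ x ∈ W, initSeg x v.length = v}

section Comb

variable {α : Type*} {W : Set (ℕ → α)} {x y : ℕ → α}

theorem initSeg_mem_comb (hx : x ∈ W) (n : ℕ) : initSeg x n ∈ comb W := ⟨x, hx, by simp⟩

theorem nil_mem_comb (hW : W.Nonempty) : [] ∈ comb W :=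
  hW.elim fun _ hx => initSeg_mem_comb hx 0

theorem mem_comb_of_prefix {u v : List α} (hv : v ∈ comb W) (hu : u <+: v) : u ∈ comb W := by
  obtain ⟨x, hx, hxv⟩ := hv
  rw [← hxv] at hu
  exact ⟨x, hx, (eq_initSeg_of_prefix hu).symm⟩

theorem mem_of_forall_initSeg_mem_comb (hW : W.Finite) (hy : ∀ n, initSeg y n ∈ comb W) :
    y ∈ W := by
  let : TopologicalSpace α := ⊥
  have : DiscreteTopology α := ⟨rfl⟩
  rw [← hW.isClosed.closure_eq, mem_closure_iff_nhds_basis (hasBasis_nhds_cylinder y)]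
  intro n _
  obtain ⟨x, hx, hxy⟩ := hy n
  exact ⟨x, hx, initSeg_eq_initSeg_iff.1 (by simpa using hxy)⟩

theorem exists_ecp_extension {T : Set (List Bool)} {x : ℕ → Bool} {a : ℕ} (hx : ConstFrom a x)
    (hT : ∀ n, initSeg x n ∈ T) (l : ℕ) :
    ∃ u ∈ T, initSeg x l <+: u ∧ ∃ b : Bool, ∀ n : ℕ, u ++ List.replicate n b ∈ T :=
  ⟨initSeg x (max l a), hT _, initSeg_prefix_initSeg (le_max_left l a), x (max l a),
    fun n => (hx.mono (le_max_right l a)).initSeg_add n ▸ hT _⟩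

theorem ecpTree_comb {W : Set (ℕ → Bool)} (hne : W.Nonempty)
    (hW : ∀ x ∈ W, ∃ a, ConstFrom a x) : ECPTree (comb W) := by
  refine ⟨⟨[], nil_mem_comb hne⟩, fun v hv u hu => mem_comb_of_prefix hv hu, ?_⟩
  rintro v ⟨x, hx, hxv⟩
  obtain ⟨a, ha⟩ := hW x hx
  rw [← hxv]
  exact exists_ecp_extension ha (initSeg_mem_comb hx) _

end Comb

def fork (x : ℕ → Bool) (k : ℕ) (b : Bool) : ℕ → Bool :=
  fun m => if m < k then x m else if m = k then !x k else b

section Fork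

variable {x : ℕ → Bool} {k : ℕ}

theorem fork_mem_cylinder (b : Bool) : fork x k b ∈ cylinder x k :=
  fun _ hm => if_pos hm

@[simp] theorem fork_apply_self (b : Bool) : fork x k b k = !x k := by simp [fork]

theorem constFrom_fork (b : Bool) : ConstFrom (k + 1) (fork x k b) := by
  intro m hm
  simp [fork, show ¬ m < k by omega, show m ≠ k by omega]

theorem fork_injective : Injective (fork x k) := by
  intro b c h
  simpa [fork] using congrFun h (k + 1)

end Fork

def replaceTooth (W : Set (ℕ → Bool)) (x : ℕ → Bool) (k : ℕ) : Set (ℕ → Bool) :=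
  insert (fork x k true) (insert (fork x k false) (W \ {x}))

section ReplaceTooth

variable {W : Set (ℕ → Bool)} {x : ℕ → Bool} {k : ℕ}

theorem fork_mem_replaceTooth (b : Bool) : fork x k b ∈ replaceTooth W x k := by
  cases b <;> simp [replaceTooth]

theorem mem_replaceTooth_iff {y : ℕ → Bool} :
    y ∈ replaceTooth W x k ↔ (∃ b, y = fork x k b) ∨ (y ∈ W ∧ y ≠ x) := by
  simp only [replaceTooth, mem_insert_iff, mem_sdiff, mem_singleton_iff, Bool.exists_bool]
  tauto

theorem mem_comb_replaceTooth {v : List Bool} (hv : v ∈ comb W) (hk : v.length ≤ k) :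
    v ∈ comb (replaceTooth W x k) := by
  obtain ⟨y, hy, hyv⟩ := hv
  by_cases hyx : y = x
  · subst hyx
    refine ⟨fork y k true, fork_mem_replaceTooth true, ?_⟩
    rw [initSeg_eq_initSeg_iff.2 (cylinder_anti _ hk (fork_mem_cylinder true)), hyv]
  · exact ⟨y, mem_replaceTooth_iff.2 (Or.inr ⟨hy, hyx⟩), hyv⟩

theorem constFrom_of_mem_replaceTooth {n : ℕ} (hW : ∀ y ∈ W, ConstFrom n y) (hnk : n ≤ k)
    {y : ℕ → Bool} (hy : y ∈ replaceTooth W x k) : ConstFrom (k + 1) y := by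
  rcases mem_replaceTooth_iff.1 hy with ⟨b, rfl⟩ | ⟨hy, -⟩
  · exact constFrom_fork b
  · exact (hW y hy).mono (by omega)

theorem finite_replaceTooth (hW : W.Finite) : (replaceTooth W x k).Finite :=
  ((hW.sdiff).insert _).insert _

end ReplaceTooth

-- Every word occupies infinitely many slots, so words entering a comb late are still listed.
def word (j : ℕ) : List Bool := (decode₂ (List Bool) j.unpair.1).getD []

theorem word_pair (w : List Bool) (t : ℕ) : word (Nat.pair (encode w) t) = w := by
  simp [word]

theorem length_word_le (j : ℕ) : (word j).length ≤ j := by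
  rcases h : decode₂ (List Bool) j.unpair.1 with _ | w
  · simp [word, h]
  · rw [word, h, Option.getD_some]
    exact (length_le_encode w).trans (decode₂_eq_some.1 h ▸ Nat.unpair_left_le j)

noncomputable def extendEnum (code : List Bool → ℕ) (T : Set (List Bool)) (p : ℕ → ℕ) (k : ℕ) :
    ℕ → ℕ :=
  fun j => if j < k then p j else T.indicator (fun w => code w + 1) (word j)

section ExtendEnum

variable {code : List Bool → ℕ} {T : Set (List Bool)} {p : ℕ → ℕ} {k : ℕ}

theorem extendEnum_mem_cylinder : extendEnum code T p k ∈ cylinder p k :=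
  fun _ hj => if_pos hj

theorem extendEnum_eq_succ (hcode : Injective code)
    (hp : ∀ j < k, ∀ w, p j = code w + 1 → w ∈ T ∧ w.length ≤ j) {j : ℕ} {w : List Bool}
    (hj : extendEnum code T p k j = code w + 1) : w ∈ T ∧ w.length ≤ j := by
  unfold extendEnum at hj
  split_ifs at hj with hjk
  · exact hp j hjk w hj
  · by_cases hw : word j ∈ T
    · rw [indicator_of_mem hw, add_left_inj] at hj
      exact hcode hj ▸ ⟨hw, length_word_le j⟩
    · simp [indicator_of_notMem hw] at hj

theorem enumeratesTree_extendEnum (hcode : Injective code)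
    (hp : ∀ j < k, ∀ w, p j = code w + 1 → w ∈ T ∧ w.length ≤ j) :
    EnumeratesTree code (extendEnum code T p k) T := by
  ext w
  refine ⟨fun hw => ⟨Nat.pair (encode w) k, ?_⟩,
    fun ⟨j, hj⟩ => (extendEnum_eq_succ hcode hp hj).1⟩
  simp [extendEnum, word_pair, hw, Nat.right_le_pair]

end ExtendEnum

def ecpEnums (code : List Bool → ℕ) : Set (ℕ → ℕ) :=
  {p | ∃ T, ECPTree T ∧ EnumeratesTree code p T}

def SolvesECP (code : List Bool → ℕ) (F : (ℕ → ℕ) → ℕ → Bool) : Prop :=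
  ∀ (p : ℕ → ℕ) (T : Set (List Bool)), ECPTree T → EnumeratesTree code p T → ECPath T (F p)

structure CombEnum (code : List Bool → ℕ) where
  teeth : Set (ℕ → Bool)
  finite : teeth.Finite
  nonempty : teeth.Nonempty
  n : ℕ
  constFrom : ∀ x ∈ teeth, ConstFrom n x
  enum : ℕ → ℕ
  enumerates : EnumeratesTree code enum (comb teeth)
  length_le : ∀ j w, enum j = code w + 1 → w.length ≤ j

namespace CombEnum

variable {code : List Bool → ℕ} (c : CombEnum code)

theorem ecpTree : ECPTree (comb c.teeth) :=
  ecpTree_comb c.nonempty fun x hx => ⟨c.n, c.constFrom x hx⟩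

theorem enum_mem_ecpEnums : c.enum ∈ ecpEnums code := ⟨_, c.ecpTree, c.enumerates⟩

theorem mem_comb_of_enum_eq {j : ℕ} {w : List Bool} (hj : c.enum j = code w + 1) :
    w ∈ comb c.teeth := by
  rw [c.enumerates]
  exact ⟨j, hj⟩

theorem solution_mem_teeth {F : (ℕ → ℕ) → ℕ → Bool} (hsol : SolvesECP code F) :
    F c.enum ∈ c.teeth :=
  mem_of_forall_initSeg_mem_comb c.finite (hsol _ _ c.ecpTree c.enumerates).1

theorem eq_solution_of_mem_cylinder {F : (ℕ → ℕ) → ℕ → Bool} (hsol : SolvesECP code F)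
    {y : ℕ → Bool} (hy : y ∈ c.teeth) (hyF : y ∈ cylinder (F c.enum) (c.n + 1)) :
    y = F c.enum :=
  (c.constFrom _ (c.solution_mem_teeth hsol)).eq_of_mem_cylinder (c.constFrom y hy) hyF

noncomputable def initial (hcode : Injective code) : CombEnum code where
  teeth := {fun _ => false}
  finite := finite_singleton _
  nonempty := singleton_nonempty _
  n := 0
  constFrom := by simp [ConstFrom]
  enum := extendEnum code (comb {fun _ => false}) 0 0
  enumerates := enumeratesTree_extendEnum hcode (by simp)
  length_le _ _ hj := (extendEnum_eq_succ hcode (by simp) hj).2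

theorem listed_mem_comb_replaceTooth (x : ℕ → Bool) {k j : ℕ} (hj : j < k) {w : List Bool}
    (hw : c.enum j = code w + 1) : w ∈ comb (replaceTooth c.teeth x k) ∧ w.length ≤ j :=
  ⟨mem_comb_replaceTooth (c.mem_comb_of_enum_eq hw) ((c.length_le j w hw).trans hj.le),
    c.length_le j w hw⟩

noncomputable def splitTooth (hcode : Injective code) (x : ℕ → Bool) (k : ℕ) (hk : c.n ≤ k) :
    CombEnum code where
  teeth := replaceTooth c.teeth x k
  finite := finite_replaceTooth c.finite
  nonempty := ⟨_, fork_mem_replaceTooth true⟩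
  n := k + 1
  constFrom _ := constFrom_of_mem_replaceTooth c.constFrom hk
  enum := extendEnum code (comb (replaceTooth c.teeth x k)) c.enum k
  enumerates :=
    enumeratesTree_extendEnum hcode fun _ hj _ => c.listed_mem_comb_replaceTooth x hj
  length_le _ _ hj :=
    (extendEnum_eq_succ hcode (fun _ hj _ => c.listed_mem_comb_replaceTooth x hj) hj).2

end CombEnum

structure Stage (code : List Bool → ℕ) (F : (ℕ → ℕ) → ℕ → Bool) extends CombEnum code where
  k : ℕ
  n_le_k : n ≤ k
  mapsTo : MapsTo F (cylinder enum k ∩ ecpEnums code) (cylinder (F enum) (n + 1))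

namespace Stage

variable {code : List Bool → ℕ} {F : (ℕ → ℕ) → ℕ → Bool}

noncomputable def ofCombEnum (hF : ContinuousOn F (ecpEnums code)) (c : CombEnum code) :
    Stage code F :=
  have hk := (hF _ c.enum_mem_ecpEnums).exists_mapsTo_cylinder (c.n + 1)
  { c with
    k := max c.n hk.choose
    n_le_k := le_max_left _ _
    mapsTo := hk.choose_spec.mono_left
      (inter_subset_inter_left _ (cylinder_anti _ (le_max_right _ _))) }

noncomputable def next (hcode : Injective code) (hF : ContinuousOn F (ecpEnums code))
    (s : Stage code F) : Stage code F :=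
  ofCombEnum hF (s.splitTooth hcode (F s.enum) s.k s.n_le_k)

end Stage

noncomputable def stages {code : List Bool → ℕ} {F : (ℕ → ℕ) → ℕ → Bool}
    (hcode : Injective code) (hF : ContinuousOn F (ecpEnums code)) : ℕ → Stage code F
  | 0 => .ofCombEnum hF (.initial hcode)
  | i + 1 => (stages hcode hF i).next hcode hF

section Construction

variable {code : List Bool → ℕ} {F : (ℕ → ℕ) → ℕ → Bool} (hcode : Injective code)
  (hF : ContinuousOn F (ecpEnums code))

local notation "S" => stages hcode hF

theorem stages_succ_teeth (i : ℕ) :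
    (S (i + 1)).teeth = replaceTooth (S i).teeth (F (S i).enum) (S i).k := rfl

theorem stages_succ_enum (i : ℕ) :
    (S (i + 1)).enum = extendEnum code (comb (S (i + 1)).teeth) (S i).enum (S i).k := rfl

theorem strictMono_stages_k : StrictMono fun i => (S i).k :=
  strictMono_nat_of_lt_succ fun i => (S (i + 1)).n_le_k

theorem le_stages_n (i : ℕ) : i ≤ (S i).n := by
  cases i with
  | zero => exact Nat.zero_le _
  | succ i => exact Nat.succ_le_succ ((strictMono_stages_k hcode hF).id_le i)

theorem stages_enum_mem_cylinder {i j : ℕ} (hij : i ≤ j) :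
    (S j).enum ∈ cylinder (S i).enum (S i).k := by
  induction j, hij using Nat.le_induction with
  | base => exact self_mem_cylinder _ _
  | succ j hij ih =>
    intro m hm
    rw [stages_succ_enum]
    have hmk := hm.trans_le ((strictMono_stages_k hcode hF).monotone hij)
    exact (extendEnum_mem_cylinder m hmk).trans (ih m hm)

noncomputable def limEnum (j : ℕ) : ℕ := (S (j + 1)).enum j

theorem limEnum_mem_cylinder (i : ℕ) : limEnum hcode hF ∈ cylinder (S i).enum (S i).k :=
  diag_mem_cylinder (fun _ _ => stages_enum_mem_cylinder hcode hF)
    (fun j => (strictMono_stages_k hcode hF).id_le (j + 1)) i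

def limTree : Set (List Bool) := {w | ∃ j, limEnum hcode hF j = code w + 1}

theorem mem_limTree_iff {w : List Bool} :
    w ∈ limTree hcode hF ↔ ∃ i, ∀ j, i ≤ j → w ∈ comb (S j).teeth := by
  have hk := strictMono_stages_k hcode hF
  constructor
  · rintro ⟨j, hj⟩
    refine ⟨j + 1, fun i hi => (S i).mem_comb_of_enum_eq (j := j) ?_⟩
    rwa [limEnum_mem_cylinder hcode hF i j ((Nat.lt_succ_self j).trans_le (hi.trans (hk.id_le i)))]
      at hj
  · rintro ⟨i, hi⟩
    set s := Nat.pair (encode w) (S i).k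
    have hs : (S 0).k < s + 1 :=
      Nat.lt_succ_of_le ((hk.monotone (Nat.zero_le i)).trans (Nat.right_le_pair _ _))
    obtain ⟨j, hjs, hsj⟩ := hk.exists_between_of_tendsto_atTop hk.tendsto_atTop hs
    have hij : i ≤ j + 1 := (hk.lt_iff_lt.1 ((Nat.right_le_pair _ _).trans_lt hsj)).le
    refine ⟨s, ?_⟩
    rw [limEnum_mem_cylinder hcode hF (j + 1) s hsj, stages_succ_enum]
    simp [extendEnum, s, word_pair, hi _ hij, Nat.le_of_lt_succ hjs]

theorem solution_eq_of_mem_teeth (hsol : SolvesECP code F) {i j : ℕ} (hij : i ≤ j)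
    (h : F (S j).enum ∈ (S i).teeth) : F (S j).enum = F (S i).enum :=
  (S i).eq_solution_of_mem_cylinder hsol h
    ((S i).mapsTo ⟨stages_enum_mem_cylinder hcode hF hij, (S j).enum_mem_ecpEnums⟩)

theorem mem_teeth_of_ne_solution (hsol : SolvesECP code F) {i j : ℕ} {x : ℕ → Bool}
    (hx : x ∈ (S i).teeth) (hne : x ≠ F (S i).enum) (hij : i ≤ j) : x ∈ (S j).teeth := by
  induction j, hij using Nat.le_induction with
  | base => exact hx
  | succ j hij ih =>
    rw [stages_succ_teeth]
    refine mem_replaceTooth_iff.2 (Or.inr ⟨ih, fun h => hne ?_⟩)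
    exact h.trans (solution_eq_of_mem_teeth hcode hF hsol hij (h ▸ hx))

theorem exists_solution_succ_eq_fork (hsol : SolvesECP code F) (i : ℕ) :
    ∃ b, F (S (i + 1)).enum = fork (F (S i).enum) (S i).k b := by
  have h := (S (i + 1)).solution_mem_teeth hsol
  rw [stages_succ_teeth] at h
  rcases mem_replaceTooth_iff.1 h with h | ⟨h, hne⟩
  · exact h
  · exact absurd (solution_eq_of_mem_teeth hcode hF hsol (Nat.le_succ i) h) hne

theorem exists_surviving_tooth (hsol : SolvesECP code F) {i : ℕ} {w : List Bool}
    (hw : w ∈ comb (S i).teeth) (hwk : w.length ≤ (S i).k) :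
    ∃ y, (∀ j, i + 1 ≤ j → y ∈ (S j).teeth) ∧ initSeg y w.length = w := by
  obtain ⟨x, hx, hxw⟩ := hw
  by_cases hxF : x = F (S i).enum
  · -- `F` picks at most one of the two forks of `x`; the other one survives.
    obtain ⟨b, hb⟩ := exists_solution_succ_eq_fork hcode hF hsol i
    refine ⟨fork x (S i).k (!b), fun j hj => mem_teeth_of_ne_solution hcode hF hsol ?_ ?_ hj, ?_⟩
    · rw [stages_succ_teeth, ← hxF]
      exact fork_mem_replaceTooth _
    · rw [hb, ← hxF]
      exact fork_injective.ne (by simp)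
    · rw [initSeg_eq_initSeg_iff.2 (cylinder_anti _ hwk (fork_mem_cylinder _)), hxw]
  · exact ⟨x, fun j hj => mem_teeth_of_ne_solution hcode hF hsol hx hxF (by omega), hxw⟩

theorem ecpTree_limTree (hsol : SolvesECP code F) : ECPTree (limTree hcode hF) := by
  refine ⟨⟨[], (mem_limTree_iff hcode hF).2 ⟨0, fun j _ => nil_mem_comb (S j).nonempty⟩⟩,
    fun w hw u hu => ?_, fun w hw => ?_⟩
  · obtain ⟨i, hi⟩ := (mem_limTree_iff hcode hF).1 hw
    exact (mem_limTree_iff hcode hF).2 ⟨i, fun j hj => mem_comb_of_prefix (hi j hj) hu⟩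
  · obtain ⟨i, hi⟩ := (mem_limTree_iff hcode hF).1 hw
    set i' := max i w.length
    obtain ⟨y, hy, hyw⟩ := exists_surviving_tooth hcode hF hsol (hi i' (le_max_left _ _))
      ((le_max_right _ _).trans ((strictMono_stages_k hcode hF).id_le i'))
    rw [← hyw]
    have hyT (m : ℕ) : initSeg y m ∈ limTree hcode hF :=
      (mem_limTree_iff hcode hF).2 ⟨i' + 1, fun j hj => initSeg_mem_comb (hy j hj) m⟩
    exact exists_ecp_extension ((S (i' + 1)).constFrom y (hy _ le_rfl)) hyT _

theorem solution_limEnum_mem_cylinder (hsol : SolvesECP code F) (i : ℕ) :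
    F (limEnum hcode hF) ∈ cylinder (F (S i).enum) ((S i).n + 1) :=
  (S i).mapsTo ⟨limEnum_mem_cylinder hcode hF i, _, ecpTree_limTree hcode hF hsol, rfl⟩

theorem solution_limEnum_apply_n_ne (hsol : SolvesECP code F) (i : ℕ) :
    F (limEnum hcode hF) (S i).n ≠ F (limEnum hcode hF) (S i).k := by
  obtain ⟨b, hb⟩ := exists_solution_succ_eq_fork hcode hF hsol i
  have hn : F (limEnum hcode hF) (S i).n = F (S i).enum (S i).k :=
    (solution_limEnum_mem_cylinder hcode hF hsol i _ (Nat.lt_succ_self _)).trans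
      ((S i).constFrom _ ((S i).solution_mem_teeth hsol) _ (S i).n_le_k).symm
  have hk : F (limEnum hcode hF) (S i).k = !F (S i).enum (S i).k := by
    rw [solution_limEnum_mem_cylinder hcode hF hsol (i + 1) _
      (Nat.lt_succ_of_lt (Nat.lt_succ_self _)), hb, fork_apply_self]
  rw [hn, hk]
  exact (Bool.eq_not_self _).mp

end Construction

theorem not_solvesECP {code : List Bool → ℕ} {F : (ℕ → ℕ) → ℕ → Bool} (hcode : Injective code)
    (hF : ContinuousOn F (ecpEnums code)) : ¬ SolvesECP code F := by
  intro hsol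
  obtain ⟨-, N, b, hb⟩ := hsol _ _ (ecpTree_limTree hcode hF hsol) rfl
  have hN := le_stages_n hcode hF N
  exact solution_limEnum_apply_n_ne hcode hF hsol N
    ((hb _ hN).trans (hb _ (hN.trans (stages hcode hF N).n_le_k)).symm)

theorem ECP_not_continuous (code : List Bool → ℕ) (hcode : Function.Injective code) :
    ¬ ∃ F : (ℕ → ℕ) → (ℕ → Bool),
      ContinuousOn F {p | ∃ T, ECPTree T ∧ EnumeratesTree code p T} ∧
      ∀ (p : ℕ → ℕ) (T : Set (List Bool)), ECPTree T → EnumeratesTree code p T →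
        ECPath T (F p) := by
  rintro ⟨F, hF, hsol⟩
  exact not_solvesECP hcode hF hsol
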